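/- For all real numbers p ≥ 2 and all vectors A, B in ℝ^n, one has |A + B|^p - |A|^p ≥ (2^{p-1} - 1)^{-1} |B|^p + p |A|^{p-2} ⟨A, B⟩, where ⟨·,·⟩ denotes the Euclidean inner product and |·| the Euclidean norm (with the convention that |A|^{p-2}⟨A,B⟩ = 0 when A = 0). -/

import Mathlib

open Real

/-! `D(A, B) = ‖A + B‖ ^ p - ‖A‖ ^ p - p ‖A‖ ^ (p - 2) ⟪A, B⟫` is the Bregman divergence of the
convex function `‖·‖ ^ p`, whose gradient at `A` is `p ‖A‖ ^ (p - 2) A`, so `D ≥ 0`. Clarkson's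
inequality for `p ≥ 2`, applied to `A + B / 2` and `B / 2`, gives
`D(A, B) ≥ 2 D(A, B / 2) + 2 ^ (1 - p) ‖B‖ ^ p`. Iterating `K` times yields
`D(A, B) ≥ C (1 - 2 ^ ((1 - p) K)) ‖B‖ ^ p` with `C = (2 ^ (p - 1) - 1)⁻¹`, the fixed point of
`C ↦ 2 ^ (1 - p) (C + 1)`, and `K → ∞` gives the bound. -/

section
variable {E : Type*} [NormedAddCommGroup E] [NormedSpace ℝ E]

theorem ConvexOn.hasFDerivAt_apply_le_sub {f : E → ℝ} {f' : E →L[ℝ] ℝ} {x : E}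
    (hf : ConvexOn ℝ Set.univ f) (hf' : HasFDerivAt f f' x) (y : E) :
    f' y ≤ f (x + y) - f x := by
  have hline : ConvexOn ℝ Set.univ (fun t : ℝ => f (x + t • y)) := by
    refine ⟨convex_univ, fun a _ b _ s t hs ht hst => ?_⟩
    have hpt : x + (s • a + t • b) • y = s • (x + a • y) + t • (x + b • y) := by
      rw [smul_add, smul_add, ← add_add_add_comm, ← add_smul, hst, one_smul, add_smul,
        smul_smul, smul_smul, smul_eq_mul, smul_eq_mul]
    simpa only [hpt] using hf.2 trivial trivial hs ht hst
  have hderiv : HasDerivAt (fun t : ℝ => f (x + t • y)) (f' y) 0 := by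
    refine hf'.comp_hasDerivAt_of_eq 0 ?_ (by simp)
    simpa using ((hasDerivAt_id (0 : ℝ)).smul_const y).const_add x
  simpa [slope] using hline.le_slope_of_hasDerivAt trivial trivial zero_lt_one hderiv

theorem convexOn_norm_rpow {p : ℝ} (hp : 1 ≤ p) : ConvexOn ℝ Set.univ (fun x : E => ‖x‖ ^ p) := by
  refine ⟨convex_univ, fun x _ y _ a b ha hb hab => ?_⟩
  calc ‖a • x + b • y‖ ^ p ≤ (a * ‖x‖ + b * ‖y‖) ^ p := by
        gcongr
        exact (convexOn_univ_norm.2 trivial trivial ha hb hab)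
    _ ≤ a * ‖x‖ ^ p + b * ‖y‖ ^ p :=
        (convexOn_rpow hp).2 (norm_nonneg x) (norm_nonneg y) ha hb hab

end

section
variable {E : Type*} [NormedAddCommGroup E] [InnerProductSpace ℝ E] {p : ℝ}

theorem clarkson_norm_rpow_add_norm_rpow_le (hp : 2 ≤ p) (x y : E) :
    ‖x‖ ^ p + ‖y‖ ^ p ≤ (‖x + y‖ ^ p + ‖x - y‖ ^ p) / 2 := by
  have hq : 1 ≤ p / 2 := by linarith
  have hsq (z : E) : (‖z‖ ^ 2) ^ (p / 2) = ‖z‖ ^ p := by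
    rw [← rpow_natCast_mul (norm_nonneg z)]
    norm_num [mul_div_cancel₀]
  have hmid := (convexOn_rpow hq).2 (sq_nonneg ‖x + y‖) (sq_nonneg ‖x - y‖)
    (by norm_num : (0 : ℝ) ≤ 1 / 2) (by norm_num : (0 : ℝ) ≤ 1 / 2) (by norm_num)
  simp only [smul_eq_mul] at hmid
  calc ‖x‖ ^ p + ‖y‖ ^ p = (‖x‖ ^ 2) ^ (p / 2) + (‖y‖ ^ 2) ^ (p / 2) := by rw [hsq, hsq]
    _ ≤ (‖x‖ ^ 2 + ‖y‖ ^ 2) ^ (p / 2) := add_rpow_le_rpow_add (sq_nonneg _) (sq_nonneg _) hq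
    _ = (1 / 2 * ‖x + y‖ ^ 2 + 1 / 2 * ‖x - y‖ ^ 2) ^ (p / 2) := by
      rw [← mul_add, parallelogram_law_with_norm ℝ x y]; ring_nf
    _ ≤ 1 / 2 * (‖x + y‖ ^ 2) ^ (p / 2) + 1 / 2 * (‖x - y‖ ^ 2) ^ (p / 2) := hmid
    _ = (‖x + y‖ ^ p + ‖x - y‖ ^ p) / 2 := by rw [hsq, hsq]; ring

noncomputable def normRpowBregman (p : ℝ) (A B : E) : ℝ :=
  ‖A + B‖ ^ p - ‖A‖ ^ p - p * ‖A‖ ^ (p - 2) * inner ℝ A B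

theorem normRpowBregman_nonneg (hp : 1 < p) (A B : E) : 0 ≤ normRpowBregman p A B := by
  have h := (convexOn_norm_rpow hp.le).hasFDerivAt_apply_le_sub (hasFDerivAt_norm_rpow A hp) B
  simp only [smul_apply, coe_innerSL_apply, smul_eq_mul] at h
  rw [normRpowBregman]
  linarith

theorem two_mul_norm_inv_two_smul_rpow (p : ℝ) (B : E) :
    2 * ‖(2 : ℝ)⁻¹ • B‖ ^ p = 2 ^ (1 - p) * ‖B‖ ^ p := by
  rw [norm_smul, mul_rpow (by positivity) (norm_nonneg B), norm_inv, Real.norm_two,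
    inv_rpow zero_le_two, ← rpow_neg zero_le_two, ← mul_assoc, sub_eq_add_neg,
    rpow_add zero_lt_two, rpow_one]

theorem normRpowBregman_halving (hp : 2 ≤ p) (A B : E) :
    2 * normRpowBregman p A ((2 : ℝ)⁻¹ • B) + 2 ^ (1 - p) * ‖B‖ ^ p ≤ normRpowBregman p A B := by
  have h := clarkson_norm_rpow_add_norm_rpow_le hp (A + (2 : ℝ)⁻¹ • B) ((2 : ℝ)⁻¹ • B)
  have hsum : A + (2 : ℝ)⁻¹ • B + (2 : ℝ)⁻¹ • B = A + B := by
    rw [add_assoc, ← add_smul]; norm_num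
  rw [hsum, add_sub_cancel_right] at h
  rw [normRpowBregman, normRpowBregman, real_inner_smul_right, ← two_mul_norm_inv_two_smul_rpow]
  linarith

theorem mul_one_sub_pow_le_normRpowBregman (hp : 2 ≤ p) (A : E) (K : ℕ) (B : E) :
    (2 ^ (p - 1) - 1)⁻¹ * (1 - (2 ^ (1 - p)) ^ K) * ‖B‖ ^ p ≤ normRpowBregman p A B := by
  induction K generalizing B with
  | zero => simpa using normRpowBregman_nonneg (by linarith) A B
  | succ K ih =>
    set C : ℝ := (2 ^ (p - 1) - 1)⁻¹
    set c : ℝ := 2 ^ (1 - p)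
    have hC : C * (1 - c) = c := by
      have h1 : (1 : ℝ) < 2 ^ (p - 1) := one_lt_rpow one_lt_two (by linarith)
      have h2 : (2 : ℝ) ^ (p - 1) * c = 1 := by
        rw [← rpow_add zero_lt_two]; norm_num
      rw [inv_mul_eq_iff_eq_mul₀ (sub_ne_zero.2 h1.ne')]
      linear_combination -h2
    calc C * (1 - c ^ (K + 1)) * ‖B‖ ^ p
        = 2 * (C * (1 - c ^ K) * ‖(2 : ℝ)⁻¹ • B‖ ^ p) + c * ‖B‖ ^ p := by
          rw [mul_left_comm, two_mul_norm_inv_two_smul_rpow]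
          linear_combination ‖B‖ ^ p * hC
      _ ≤ 2 * normRpowBregman p A ((2 : ℝ)⁻¹ • B) + c * ‖B‖ ^ p := by gcongr; exact ih _
      _ ≤ normRpowBregman p A B := normRpowBregman_halving hp A B

theorem mul_norm_rpow_le_normRpowBregman (hp : 2 ≤ p) (A B : E) :
    (2 ^ (p - 1) - 1)⁻¹ * ‖B‖ ^ p ≤ normRpowBregman p A B := by
  have hc : (2 : ℝ) ^ (1 - p) < 1 := rpow_lt_one_of_one_lt_of_neg one_lt_two (by linarith)
  have hlim := (((tendsto_pow_atTop_nhds_zero_of_lt_one (by positivity) hc).const_sub 1).const_mul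
    (2 ^ (p - 1) - 1)⁻¹).mul_const (‖B‖ ^ p)
  simpa using le_of_tendsto' hlim (fun K => mul_one_sub_pow_le_normRpowBregman hp A K B)

end

theorem convexity_lower_bound (n : ℕ) (p : ℝ) (hp : 2 ≤ p)
    (A B : EuclideanSpace ℝ (Fin n)) :
    ‖A + B‖ ^ p - ‖A‖ ^ p ≥
      (2 ^ (p - 1) - 1)⁻¹ * ‖B‖ ^ p + p * ‖A‖ ^ (p - 2) * (inner ℝ A B : ℝ) := by
  have h := mul_norm_rpow_le_normRpowBregman hp A B
  rw [normRpowBregman] at h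
  linarith
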